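/- arXiv:2203.15094 — 2 statements merged into one kernel-verified Lean document; each statement's English description precedes it below -/
import Mathlib

section
/- Let (S, ρ) be a matroid scheme. The closure function cl: S → S satisfies: (CL1) x ≤ cl(x) for all x ∈ S; (CL2) if x ≤ y then cl(x) ≤ cl(y); (CL3) cl(cl(x)) = cl(x) for all x ∈ S; (CL4) if x ∈ S, a and b are atoms of S, u ∈ x∨b, a ≤ cl(u), and a ≰ cl(x), then there exists v ∈ x∨a such that v ≤ cl(u) and b ≤ cl(v). -/
/-- The set of minimal upper bounds of `x` and `y` (denoted `x ∨ y` in the paper). -/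
def mub {S : Type*} [PartialOrder S] (x y : S) : Set S :=
  {u | x ≤ u ∧ y ≤ u ∧ ∀ v, x ≤ v → y ≤ v → v ≤ u → v = u}

/-- The set of maximal lower bounds of `x` and `y` (denoted `x ∧ y` in the paper). -/
def mlb {S : Type*} [PartialOrder S] (x y : S) : Set S :=
  {l | l ≤ x ∧ l ≤ y ∧ ∀ m, m ≤ x → m ≤ y → l ≤ m → m = l}

/-- The set of minimal upper bounds of a subset `T`. -/
def mubSet {S : Type*} [PartialOrder S] (T : Set S) : Set S :=
  {u | (∀ t ∈ T, t ≤ u) ∧ ∀ v, (∀ t ∈ T, t ≤ v) → v ≤ u → v = u}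

/-- The number of atoms below `x`, i.e. `|x|`, the rank of `x` in a simplicial poset. -/
noncomputable def natRank {S : Type*} [PartialOrder S] [OrderBot S] (x : S) : ℕ :=
  Nat.card {a : S // IsAtom a ∧ a ≤ x}

/-- A finite bounded-below poset is simplicial if every lower interval is isomorphic to
the Boolean lattice of subsets of the set of atoms below. -/
def IsSimplicialPoset (S : Type*) [PartialOrder S] [OrderBot S] [Fintype S] : Prop :=
  ∀ x : S, Nonempty (Set.Iic x ≃o Set {a : S // IsAtom a ∧ a ≤ x})

/-- A matroid scheme: a rank function `ρ` on a finite simplicial poset `S`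
satisfying (M1)–(M5). -/
structure IsMatroidScheme {S : Type*} [PartialOrder S] [OrderBot S] [Fintype S]
    (ρ : S → ℕ) : Prop where
  simplicial : IsSimplicialPoset S
  M1 : ∀ x : S, ρ x ≤ natRank x
  M2 : ∀ ⦃x y : S⦄, x ≤ y → ρ x ≤ ρ y
  M3 : ∀ x y u l : S, u ∈ mub x y → l ∈ mlb x y → ρ u + ρ l ≤ ρ x + ρ y
  M4 : ∀ x y l : S, l ∈ mlb x y → ρ x = ρ l → (mub x y).Nonempty
  M5 : ∀ x y : S, ρ x < ρ y →
    ∃ a : S, IsAtom a ∧ a ≤ y ∧ ¬ a ≤ x ∧ (mub x a).Nonempty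

/-- `cl` is the closure operator of a matroid scheme `(S, ρ)`:
`cl x` is the greatest element above `x` of the same rank. -/
def IsClosureFun {S : Type*} [PartialOrder S] (ρ : S → ℕ) (cl : S → S) : Prop :=
  ∀ x : S, x ≤ cl x ∧ ρ (cl x) = ρ x ∧ ∀ y : S, x ≤ y → ρ y = ρ x → y ≤ cl x

/-- The bases of a matroid scheme: the maximal independent elements. -/
def Bases {S : Type*} [PartialOrder S] [OrderBot S] (ρ : S → ℕ) : Set S :=
  {x | ρ x = natRank x ∧ ∀ w, ρ w = natRank w → x ≤ w → w = x}

/-- The circuits of a matroid scheme: the minimal dependent elements. -/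
def Circuits {S : Type*} [PartialOrder S] [OrderBot S] (ρ : S → ℕ) : Set S :=
  {x | ρ x < natRank x ∧ ∀ y, ρ y < natRank y → y ≤ x → y = x}

/-- `c` is the complement `x ∖ a` of `a` in the Boolean lattice `S_{≤ x}`. -/
def IsComplementIn {S : Type*} [PartialOrder S] [OrderBot S] (c a x : S) : Prop :=
  c ≤ x ∧ a ≤ x ∧ (∀ l : S, l ≤ c → l ≤ a → l = ⊥) ∧
    (∀ u : S, u ≤ x → c ≤ u → a ≤ u → u = x)

/-- The rank of a matroid scheme: the common value of `ρ` on maximal elements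
(equal to the maximum value of `ρ`). -/
noncomputable def schemeRank {S : Type*} [Fintype S] (ρ : S → ℕ) : ℕ :=
  sSup (Set.range ρ)

/-- The Tutte polynomial of a matroid scheme, as a two-variable integer function. -/
noncomputable def tutte {S : Type*} [PartialOrder S] [OrderBot S] [Fintype S]
    (ρ : S → ℕ) (x y : ℤ) : ℤ :=
  ∑ w : S, (x - 1) ^ (schemeRank ρ - ρ w) * (y - 1) ^ (natRank w - ρ w)

/-- An element of a poset is an order-atom if it covers a global minimum. -/
def OrdAtom {P : Type*} [PartialOrder P] (a : P) : Prop :=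
  ∃ b : P, (∀ z : P, b ≤ z) ∧ b ⋖ a

/-- A partial order is a geometric lattice: it is bounded below, every pair has a least
upper bound and greatest lower bound, it is atomistic, and it is (upper) semimodular. -/
def IsGeomLatOrder (P : Type*) [PartialOrder P] : Prop :=
  (∃ b : P, ∀ x : P, b ≤ x) ∧
  (∀ x y : P, ∃ u : P, IsLUB {x, y} u) ∧
  (∀ x y : P, ∃ l : P, IsGLB {x, y} l) ∧
  (∀ x : P, IsLUB {a : P | OrdAtom a ∧ a ≤ x} x) ∧
  (∀ x y m j : P, IsGLB {x, y} m → IsLUB {x, y} j → m ⋖ x → y ⋖ j)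

/-- A geometric poset: a finite bounded-below poset with rank function `rk`
satisfying (G1) and (G2). -/
def IsGeometricPoset (P : Type*) [PartialOrder P] [OrderBot P] [Fintype P]
    (rk : P → ℕ) : Prop :=
  rk ⊥ = 0 ∧
  (∀ ⦃x y : P⦄, x ≤ y → rk x ≤ rk y) ∧
  (∀ x y : P, x ⋖ y → rk y = rk x + 1) ∧
  (∀ m : P, IsMax m → IsGeomLatOrder (Set.Iic m)) ∧
  (∀ (x : P) (A : Set P), (∀ a ∈ A, IsAtom a) →
    ∀ y ∈ mubSet A, rk x < rk y → rk y = Nat.card A →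
      ∃ a ∈ A, ¬ a ≤ x ∧ ∃ w : P, x ≤ w ∧ a ≤ w)

lemma natRank_of_isAtom {S : Type*} [PartialOrder S] [OrderBot S] {a : S} (ha : IsAtom a) :
    natRank a = 1 := by
  rw [natRank, Nat.card_eq_one_iff_unique]
  refine ⟨⟨fun ⟨c, hc, hca⟩ ⟨d, hd, hda⟩ => ?_⟩, ⟨⟨a, ha, le_rfl⟩⟩⟩
  rw [Subtype.mk.injEq, (ha.le_iff_eq hc.1).mp hca, (ha.le_iff_eq hd.1).mp hda]

lemma bot_mem_mlb_of_not_le {S : Type*} [PartialOrder S] [OrderBot S] {x a : S}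
    (ha : IsAtom a) (hax : ¬ a ≤ x) : (⊥ : S) ∈ mlb x a := by
  refine ⟨bot_le, bot_le, fun m hmx hma _ => ?_⟩
  rcases ha.le_iff.mp hma with rfl | rfl
  · rfl
  · exact absurd hmx hax

section Finite

variable {S : Type*} [PartialOrder S] [Finite S]

lemma exists_mem_mlb_ge {x y z : S} (hzx : z ≤ x) (hzy : z ≤ y) : ∃ l ∈ mlb x y, z ≤ l := by
  obtain ⟨l, ⟨hlx, hly, hzl⟩, hmax⟩ :=
    Set.Finite.exists_maximalFor id {m | m ≤ x ∧ m ≤ y ∧ z ≤ m} (Set.toFinite _)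
      ⟨z, hzx, hzy, le_rfl⟩
  exact ⟨l, ⟨hlx, hly, fun m hmx hmy hlm =>
    le_antisymm (hmax ⟨hmx, hmy, hzl.trans hlm⟩ hlm) hlm⟩, hzl⟩

lemma exists_mem_mub_le {x y c : S} (hxc : x ≤ c) (hyc : y ≤ c) : ∃ u ∈ mub x y, u ≤ c := by
  obtain ⟨u, ⟨hxu, hyu, huc⟩, hmin⟩ :=
    Set.Finite.exists_minimalFor id {w | x ≤ w ∧ y ≤ w ∧ w ≤ c} (Set.toFinite _)
      ⟨c, hxc, hyc, le_rfl⟩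
  exact ⟨u, ⟨hxu, hyu, fun w hxw hyw hwu =>
    le_antisymm hwu (hmin ⟨hxw, hyw, hwu.trans huc⟩ hwu)⟩, huc⟩

end Finite

namespace IsMatroidScheme

variable {S : Type*} [PartialOrder S] [OrderBot S] [Fintype S] {ρ : S → ℕ}
  (h : IsMatroidScheme ρ)
include h

lemma monotone : Monotone ρ := h.M2

lemma rho_le_add_one_of_mem_mub {x a u : S} (ha : IsAtom a) (hax : ¬ a ≤ x)
    (hu : u ∈ mub x a) : ρ u ≤ ρ x + 1 := by
  have hM3 := h.M3 x a u ⊥ hu (bot_mem_mlb_of_not_le ha hax)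
  have hρa : ρ a ≤ 1 := natRank_of_isAtom ha ▸ h.M1 a
  omega

end IsMatroidScheme

namespace IsClosureFun

variable {S : Type*} [PartialOrder S] {ρ : S → ℕ} {cl : S → S} (hcl : IsClosureFun ρ cl)
include hcl

lemma le_cl (x : S) : x ≤ cl x := (hcl x).1

lemma rho_cl (x : S) : ρ (cl x) = ρ x := (hcl x).2.1

lemma le_cl_of_le_of_rho_le (hρ : Monotone ρ) {x y : S} (hxy : x ≤ y) (hyx : ρ y ≤ ρ x) :
    y ≤ cl x :=
  (hcl x).2.2 y hxy (le_antisymm hyx (hρ hxy))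

lemma cl_cl (hρ : Monotone ρ) (x : S) : cl (cl x) = cl x :=
  le_antisymm
    (hcl.le_cl_of_le_of_rho_le hρ ((hcl.le_cl x).trans (hcl.le_cl _))
      (by rw [hcl.rho_cl, hcl.rho_cl]))
    (hcl.le_cl _)

/-- The two closures meet in some `l ≥ x`, which has full rank in `cl x`; (M4) then yields a
join `u` of `cl x` and `cl y`, and (M3) forces `ρ u = ρ y`, so `u ≤ cl y`. -/
lemma cl_mono [OrderBot S] [Fintype S] (h : IsMatroidScheme ρ) {x y : S} (hxy : x ≤ y) :
    cl x ≤ cl y := by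
  obtain ⟨l, hl, hxl⟩ :=
    exists_mem_mlb_ge (hcl.le_cl x) (hxy.trans (hcl.le_cl y))
  have hρl : ρ (cl x) = ρ l :=
    le_antisymm (hcl.rho_cl x ▸ h.M2 hxl) (h.M2 hl.1)
  obtain ⟨u, hu⟩ := h.M4 (cl x) (cl y) l hl hρl
  have hM3 := h.M3 (cl x) (cl y) u l hu hl
  have hu_le : u ≤ cl y :=
    hcl.le_cl_of_le_of_rho_le h.monotone ((hcl.le_cl y).trans hu.2.1)
      (by rw [← hcl.rho_cl y]; omega)
  exact hu.1.trans hu_le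

/-- A minimal join `v` of `x` and `a` below `cl u` has rank `> ρ x` because `a ≰ cl x`, while
`ρ u ≤ ρ x + 1`; so `v` already has the rank of `cl u`, and `cl u ≤ cl v`. -/
lemma exists_mem_mub_exchange [OrderBot S] [Fintype S] (h : IsMatroidScheme ρ)
    {x a b u : S} (hb : IsAtom b) (hu : u ∈ mub x b) (hau : a ≤ cl u)
    (hax : ¬ a ≤ cl x) : ∃ v ∈ mub x a, v ≤ cl u ∧ b ≤ cl v := by
  have hbx : ¬ b ≤ x := fun hbx => hax (hu.2.2 x le_rfl hbx hu.1 ▸ hau)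
  obtain ⟨v, hv, hvu⟩ := exists_mem_mub_le (hu.1.trans (hcl.le_cl u)) hau
  have hxv : ρ x < ρ v := lt_of_not_ge fun hvx =>
    hax (hv.2.1.trans (hcl.le_cl_of_le_of_rho_le h.monotone hv.1 hvx))
  have hux : ρ u ≤ ρ x + 1 := h.rho_le_add_one_of_mem_mub hb hbx hu
  have hcl_le : cl u ≤ cl v :=
    hcl.le_cl_of_le_of_rho_le h.monotone hvu (by rw [hcl.rho_cl]; omega)
  exact ⟨v, hv, hvu, hu.2.1.trans ((hcl.le_cl u).trans hcl_le)⟩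

end IsClosureFun

/-- Proposition 5.4: the closure function satisfies (CL1)–(CL4). -/
theorem statement3 {S : Type*} [PartialOrder S] [OrderBot S] [Fintype S]
    (ρ : S → ℕ) (h : IsMatroidScheme ρ) (cl : S → S) (hcl : IsClosureFun ρ cl) :
    (∀ x : S, x ≤ cl x) ∧
    (∀ x y : S, x ≤ y → cl x ≤ cl y) ∧
    (∀ x : S, cl (cl x) = cl x) ∧
    (∀ x a b u : S, IsAtom a → IsAtom b → u ∈ mub x b → a ≤ cl u → ¬ a ≤ cl x →
      ∃ v ∈ mub x a, v ≤ cl u ∧ b ≤ cl v) :=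
  ⟨hcl.le_cl, fun _ _ => hcl.cl_mono h, hcl.cl_cl h.monotone,
    fun _ _ _ _ _ hb hu hau hax => hcl.exists_mem_mub_exchange h hb hu hau hax⟩
end

section
/- Let M = (S, ρ) be a matroid scheme. Its set of circuits C(M) satisfies: (C1) 0̂ ∉ C(M); (C2) if x, y ∈ C(M) and x ≤ y, then x = y; (C3) if x, y ∈ C(M) with x ≠ y, u ∈ x∨y, and a is an atom of S with a ≤ x∧y, then there exists z ∈ C(M) such that z ≤ u and z ≱ a. -/
/-
For `u ∈ x ∨ y` the interval `S_{≤u}` is Boolean, so the atom count satisfies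
`|u| + |x ∧ y| = |x| + |y|`. The element `x ∧ y` lies strictly below the circuit `x`, hence is
independent, and submodularity (M3) gives `ρ(u) ≤ |u| - 2`. Removing the atom `a` from `u`
lowers `|u|` by one and does not raise `ρ`, so `u ∖ a` is still dependent and contains a circuit,
which avoids `a`.
-/

theorem Set.natCard_atoms_subset {α : Type*} (s : Set α) :
    Nat.card {t : Set α // IsAtom t ∧ t ⊆ s} = s.ncard := by
  rw [← Nat.card_coe_set_eq]
  refine Nat.card_congr (Equiv.ofBijective
    (fun x => ⟨{x.1}, Set.isAtom_iff.2 ⟨x.1, rfl⟩, Set.singleton_subset_iff.2 x.2⟩) ⟨?_, ?_⟩).symm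
  · intro x y hxy
    exact Subtype.ext (Set.singleton_eq_singleton_iff.1 (congrArg Subtype.val hxy))
  · rintro ⟨t, ht, hts⟩
    obtain ⟨x, rfl⟩ := Set.isAtom_iff.1 ht
    exact ⟨⟨x, hts rfl⟩, rfl⟩

section SimplicialInterval

variable {S : Type*} [PartialOrder S] {α : Type*} {u : S}

theorem OrderIso.union_eq_of_mem_mub (φ : Set.Iic u ≃o Set α) {x y : S}
    (hu : u ∈ mub x y) : φ ⟨x, hu.1⟩ ∪ φ ⟨y, hu.2.1⟩ = φ ⊤ := by
  set m := φ.symm (φ ⟨x, hu.1⟩ ∪ φ ⟨y, hu.2.1⟩)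
  have hφm : φ m = φ ⟨x, hu.1⟩ ∪ φ ⟨y, hu.2.1⟩ := φ.apply_symm_apply _
  have hxm : (⟨x, hu.1⟩ : Set.Iic u) ≤ m := by
    rw [← φ.le_iff_le, hφm]; exact Set.subset_union_left
  have hym : (⟨y, hu.2.1⟩ : Set.Iic u) ≤ m := by
    rw [← φ.le_iff_le, hφm]; exact Set.subset_union_right
  have hm_top : m = ⊤ := Subtype.ext (hu.2.2 m hxm hym m.2)
  rw [← hφm, hm_top]

theorem OrderIso.inter_eq_of_mem_mlb (φ : Set.Iic u ≃o Set α) {x y l : S}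
    (hx : x ≤ u) (hy : y ≤ u) (hl : l ∈ mlb x y) :
    φ ⟨x, hx⟩ ∩ φ ⟨y, hy⟩ = φ ⟨l, hl.1.trans hx⟩ := by
  set m := φ.symm (φ ⟨x, hx⟩ ∩ φ ⟨y, hy⟩)
  have hφm : φ m = φ ⟨x, hx⟩ ∩ φ ⟨y, hy⟩ := φ.apply_symm_apply _
  have hmx : m ≤ ⟨x, hx⟩ := by
    rw [← φ.le_iff_le, hφm]; exact Set.inter_subset_left
  have hmy : m ≤ ⟨y, hy⟩ := by
    rw [← φ.le_iff_le, hφm]; exact Set.inter_subset_right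
  have hlm : (⟨l, hl.1.trans hx⟩ : Set.Iic u) ≤ m := by
    rw [← φ.le_iff_le, hφm]
    exact Set.subset_inter (φ.monotone hl.1) (φ.monotone hl.2.1)
  have hm_l : m = ⟨l, hl.1.trans hx⟩ := Subtype.ext (hl.2.2 m hmx hmy hlm)
  rw [← hφm, hm_l]

variable [OrderBot S]

theorem natRank_bot : natRank (⊥ : S) = 0 := by
  have : IsEmpty {a : S // IsAtom a ∧ a ≤ ⊥} := ⟨fun a => a.2.1.1 (le_bot_iff.1 a.2.2)⟩
  exact Nat.card_of_isEmpty

theorem natRank_eq_ncard (φ : Set.Iic u ≃o Set α) {v : S} (hv : v ≤ u) :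
    natRank v = (φ ⟨v, hv⟩).ncard := by
  have atoms_Iic : {a : S // IsAtom a ∧ a ≤ v} ≃
      {p : Set.Iic u // IsAtom p ∧ p ≤ ⟨v, hv⟩} :=
    { toFun := fun a => ⟨⟨a.1, a.2.2.trans hv⟩, a.2.1.Iic _, a.2.2⟩
      invFun := fun p => ⟨p.1, p.2.1.of_isAtom_coe_Iic, p.2.2⟩
      left_inv := fun _ => rfl
      right_inv := fun _ => rfl }
  have atoms_set : {p : Set.Iic u // IsAtom p ∧ p ≤ ⟨v, hv⟩} ≃
      {t : Set α // IsAtom t ∧ t ⊆ φ ⟨v, hv⟩} :=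
    φ.toEquiv.subtypeEquiv fun p => and_congr (φ.isAtom_iff p).symm φ.le_iff_le.symm
  rw [← Set.natCard_atoms_subset]
  exact Nat.card_congr (atoms_Iic.trans atoms_set)

end SimplicialInterval

section SimplicialPoset

variable {S : Type*} [PartialOrder S] [OrderBot S] [Fintype S]

theorem IsSimplicialPoset.natRank_add_natRank_of_mem_mub (hS : IsSimplicialPoset S)
    {x y u l : S} (hu : u ∈ mub x y) (hl : l ∈ mlb x y) :
    natRank u + natRank l = natRank x + natRank y := by
  obtain ⟨φ⟩ := hS u
  have h := Set.ncard_union_add_ncard_inter (φ ⟨x, hu.1⟩) (φ ⟨y, hu.2.1⟩)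
  rw [φ.union_eq_of_mem_mub hu, φ.inter_eq_of_mem_mlb hu.1 hu.2.1 hl] at h
  rw [natRank_eq_ncard φ Set.self_mem_Iic, natRank_eq_ncard φ hu.1, natRank_eq_ncard φ hu.2.1,
    natRank_eq_ncard φ (hl.1.trans hu.1), ← h]
  rfl

theorem IsSimplicialPoset.exists_natRank_succ_eq_of_atom_le (hS : IsSimplicialPoset S)
    {a u : S} (ha : IsAtom a) (hau : a ≤ u) :
    ∃ w ≤ u, ¬ a ≤ w ∧ natRank w + 1 = natRank u := by
  obtain ⟨φ⟩ := hS u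
  obtain ⟨t, ht⟩ := Set.isAtom_iff.1 ((φ.isAtom_iff _).2 (ha.Iic hau))
  set w := φ.symm {t}ᶜ
  have hφw : φ ⟨w, w.2⟩ = {t}ᶜ := φ.apply_symm_apply _
  refine ⟨w, w.2, fun haw => ?_, ?_⟩
  · have : φ ⟨a, hau⟩ ⊆ φ ⟨w, w.2⟩ := φ.monotone haw
    rw [ht, hφw] at this
    exact this rfl rfl
  · have hu_top : (⟨u, Set.self_mem_Iic⟩ : Set.Iic u) = ⊤ := rfl
    rw [natRank_eq_ncard φ w.2, natRank_eq_ncard φ Set.self_mem_Iic, hφw, hu_top, map_top φ,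
      Set.top_eq_univ, Set.ncard_univ, ← Set.ncard_add_ncard_compl {t}, Set.ncard_singleton,
      add_comm]

end SimplicialPoset

section Circuits

variable {S : Type*} [PartialOrder S] [OrderBot S] {ρ : S → ℕ}

theorem bot_notMem_circuits : (⊥ : S) ∉ Circuits ρ := fun h =>
  Nat.not_lt_zero _ (natRank_bot (S := S) ▸ h.1)

theorem eq_of_mem_circuits_of_le {x y : S} (hx : x ∈ Circuits ρ) (hy : y ∈ Circuits ρ)
    (hxy : x ≤ y) : x = y :=
  hy.2 x hx.1 hxy

theorem natRank_le_of_lt_mem_circuits {x y : S} (hx : x ∈ Circuits ρ) (hyx : y < x) :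
    natRank y ≤ ρ y :=
  not_lt.1 fun hy => hyx.ne (hx.2 y hy hyx.le)

theorem exists_mem_circuits_le [Finite S] {w : S} (hw : ρ w < natRank w) :
    ∃ z ∈ Circuits ρ, z ≤ w := by
  obtain ⟨z, hzw, hz⟩ := Finite.exists_le_minimal (p := fun z => ρ z < natRank z) hw
  exact ⟨z, ⟨hz.1, fun y hy hyz => hz.eq_of_le hy hyz⟩, hzw⟩

end Circuits

theorem IsMatroidScheme.exists_mem_circuits_le_not_atom_le {S : Type*} [PartialOrder S]
    [OrderBot S] [Fintype S] {ρ : S → ℕ} (h : IsMatroidScheme ρ) {x y u l a : S}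
    (hx : x ∈ Circuits ρ) (hy : y ∈ Circuits ρ) (hxy : x ≠ y) (hu : u ∈ mub x y)
    (hl : l ∈ mlb x y) (ha : IsAtom a) (hal : a ≤ l) :
    ∃ z ∈ Circuits ρ, z ≤ u ∧ ¬ a ≤ z := by
  have hlx : l < x := hl.1.lt_of_ne fun hlx =>
    hxy (eq_of_mem_circuits_of_le hx hy (hlx ▸ hl.2.1))
  obtain ⟨w, hwu, haw, hw⟩ :=
    h.simplicial.exists_natRank_succ_eq_of_atom_le ha (hal.trans (hl.1.trans hu.1))
  have hw_dep : ρ w < natRank w := by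
    have hρw := h.M2 hwu
    have hρ_sub := h.M3 x y u l hu hl
    have hl_indep := natRank_le_of_lt_mem_circuits hx hlx
    have hrank := h.simplicial.natRank_add_natRank_of_mem_mub hu hl
    have hx_dep := hx.1
    have hy_dep := hy.1
    -- `ρ w ≤ ρ u ≤ ρ x + ρ y - ρ l ≤ (|x| - 1) + (|y| - 1) - |l| = |u| - 2 < |w|`
    omega
  obtain ⟨z, hz, hzw⟩ := exists_mem_circuits_le hw_dep
  exact ⟨z, hz, hzw.trans hwu, fun haz => haw (haz.trans hzw)⟩

/-- Proposition 6.7: the circuits of a matroid scheme satisfy (C1)–(C3). -/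
theorem statement10 {S : Type*} [PartialOrder S] [OrderBot S] [Fintype S]
    (ρ : S → ℕ) (h : IsMatroidScheme ρ) :
    ((⊥ : S) ∉ Circuits ρ) ∧
    (∀ x y : S, x ∈ Circuits ρ → y ∈ Circuits ρ → x ≤ y → x = y) ∧
    (∀ x y u a : S, x ∈ Circuits ρ → y ∈ Circuits ρ → x ≠ y → u ∈ mub x y →
      IsAtom a → (∃ l ∈ mlb x y, a ≤ l) →
      ∃ z ∈ Circuits ρ, z ≤ u ∧ ¬ a ≤ z) :=
  ⟨bot_notMem_circuits, fun _ _ => eq_of_mem_circuits_of_le,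
    fun _ _ _ _ hx hy hxy hu ha ⟨_, hl, hal⟩ =>
      h.exists_mem_circuits_le_not_atom_le hx hy hxy hu hl ha hal⟩
end
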